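/- arXiv:1812.00160 — 2 statements merged into one kernel-verified Lean document; each statement's English description precedes it below -/
import Mathlib

section
/- For ε1, ε2 ∈ [0,1], let (W⁻, W⁺) be the irregular kernel transform of BEC(ε1) and BEC(ε2). Then Z(W⁻) = ε1 + ε2 − ε1·ε2 and Z(W⁺) = ε1·ε2; in particular, for binary erasure channels the bound Z(W⁻) ≤ Z(W1) + Z(W2) − Z(W1)·Z(W2) holds with equality. -/
/-!
For every pair of channels the product `W⁺(·|0) W⁺(·|1)` factorizes into a `W1`-part and a
`W2`-part, and summing over the side information `u1` only symmetrizes the `W1`-part, so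
`Z(W⁺) = Z(W1) Z(W2)`. For `W⁻` of two erasure channels, an output with both coordinates unerased
is compatible with exactly one `u1` and contributes nothing to `Z`, while an output with an erased
coordinate has the same likelihood under both inputs and contributes its whole mass, so
`Z(W⁻) = 1 - (1 - ε1)(1 - ε2)`.
-/

open Finset Real

/-- Bhattacharyya parameter Z(W). -/
noncomputable def bhatt {Y : Type*} [Fintype Y] (W : Y → ZMod 2 → ℝ) : ℝ :=
  ∑ y, Real.sqrt (W y 0 * W y 1)

/-- The minus-channel W⁻ of the irregular kernel transform. -/
noncomputable def Wminus {Y1 Y2 : Type*} (W1 : Y1 → ZMod 2 → ℝ)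
    (W2 : Y2 → ZMod 2 → ℝ) : Y1 × Y2 → ZMod 2 → ℝ :=
  fun y u1 => ∑ u2 : ZMod 2, (1 / 2) * W1 y.1 (u1 + u2) * W2 y.2 u2

/-- The plus-channel W⁺ of the irregular kernel transform. -/
noncomputable def Wplus {Y1 Y2 : Type*} (W1 : Y1 → ZMod 2 → ℝ)
    (W2 : Y2 → ZMod 2 → ℝ) : Y1 × Y2 × ZMod 2 → ZMod 2 → ℝ :=
  fun y u2 => (1 / 2) * W1 y.1 (y.2.2 + u2) * W2 y.2.1 u2

/-- The binary erasure channel with erasure probability ε. -/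
noncomputable def BEC (ε : ℝ) : Option (ZMod 2) → ZMod 2 → ℝ :=
  fun y x => match y with
    | some v => if v = x then 1 - ε else 0
    | none => ε

theorem ZMod.sum_univ_two {M : Type*} [AddCommMonoid M] (f : ZMod 2 → M) :
    ∑ x, f x = f 0 + f 1 :=
  Fin.sum_univ_two f

theorem ZMod.two_cases (v : ZMod 2) : v = 0 ∨ v = 1 := by
  revert v; decide

theorem bhatt_Wplus {Y1 Y2 : Type*} [Fintype Y1] [Fintype Y2]
    (W1 : Y1 → ZMod 2 → ℝ) {W2 : Y2 → ZMod 2 → ℝ}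
    (hW2 : ∀ y x, 0 ≤ W2 y x) :
    bhatt (Wplus W1 W2) = bhatt W1 * bhatt W2 := by
  have hterm : ∀ y1 y2, ∑ u1 : ZMod 2, √(Wplus W1 W2 (y1, y2, u1) 0 * Wplus W1 W2 (y1, y2, u1) 1)
      = √(W1 y1 0 * W1 y1 1) * √(W2 y2 0 * W2 y2 1) := by
    intro y1 y2
    have hsplit : ∀ u1, Wplus W1 W2 (y1, y2, u1) 0 * Wplus W1 W2 (y1, y2, u1) 1
        = (1 / 2) ^ 2 * (W1 y1 u1 * W1 y1 (u1 + 1)) * (W2 y2 0 * W2 y2 1) := by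
      intro u1; simp only [Wplus, add_zero]; ring
    simp only [hsplit, Real.sqrt_mul' _ (mul_nonneg (hW2 _ _) (hW2 _ _)),
      Real.sqrt_mul (sq_nonneg _), Real.sqrt_sq (by norm_num : (0:ℝ) ≤ 1 / 2),
      ZMod.sum_univ_two, zero_add, show (1 + 1 : ZMod 2) = 0 from rfl, mul_comm (W1 y1 1)]
    ring
  simp only [bhatt, Fintype.sum_prod_type, hterm, Finset.sum_mul_sum]

theorem BEC_nonneg {ε : ℝ} (hε : ε ∈ Set.Icc (0 : ℝ) 1) (y : Option (ZMod 2)) (x : ZMod 2) :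
    0 ≤ BEC ε y x := by
  obtain ⟨h0, h1⟩ := hε
  rcases y with _ | v
  · exact h0
  · simp only [BEC]; split_ifs <;> linarith

theorem sum_BEC_none (ε : ℝ) : ∑ x, BEC ε none x = 2 * ε := by
  simp [BEC]

theorem sum_BEC_some (ε : ℝ) (v : ZMod 2) : ∑ x, BEC ε (some v) x = 1 - ε := by
  simp [BEC]

theorem bhatt_BEC {ε : ℝ} (hε : 0 ≤ ε) : bhatt (BEC ε) = ε := by
  simp [bhatt, BEC, Fintype.sum_option, ZMod.sum_univ_two, Real.sqrt_mul_self hε]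

theorem Wminus_apply_of_snd_const {Y1 Y2 : Type*} (W1 : Y1 → ZMod 2 → ℝ) (W2 : Y2 → ZMod 2 → ℝ)
    {y1 : Y1} {y2 : Y2} {c : ℝ} (hc : ∀ x, W2 y2 x = c) (u : ZMod 2) :
    Wminus W1 W2 (y1, y2) u = c / 2 * ∑ x, W1 y1 x := by
  calc Wminus W1 W2 (y1, y2) u = ∑ u2, c / 2 * W1 y1 (u + u2) := by
        simp only [Wminus, hc]; exact Finset.sum_congr rfl fun _ _ => by ring
    _ = ∑ x, c / 2 * W1 y1 x := Equiv.sum_comp (Equiv.addLeft u) (fun x => c / 2 * W1 y1 x)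
    _ = c / 2 * ∑ x, W1 y1 x := (Finset.mul_sum _ _ _).symm

theorem Wminus_apply_of_fst_const {Y1 Y2 : Type*} (W1 : Y1 → ZMod 2 → ℝ) (W2 : Y2 → ZMod 2 → ℝ)
    {y1 : Y1} {y2 : Y2} {c : ℝ} (hc : ∀ x, W1 y1 x = c) (u : ZMod 2) :
    Wminus W1 W2 (y1, y2) u = c / 2 * ∑ x, W2 y2 x := by
  simp only [Wminus, hc, Finset.mul_sum]
  exact Finset.sum_congr rfl fun _ _ => by ring

theorem Wminus_BEC_some_some_mul (ε1 ε2 : ℝ) (v w : ZMod 2) :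
    Wminus (BEC ε1) (BEC ε2) (some v, some w) 0 * Wminus (BEC ε1) (BEC ε2) (some v, some w) 1 = 0 := by
  simp only [Wminus, BEC, ZMod.sum_univ_two]
  rcases ZMod.two_cases v with rfl | rfl <;> rcases ZMod.two_cases w with rfl | rfl <;> simp +decide

theorem bhatt_Wminus_BEC {ε1 ε2 : ℝ} (h1 : ε1 ∈ Set.Icc (0 : ℝ) 1) (h2 : ε2 ∈ Set.Icc (0 : ℝ) 1) :
    bhatt (Wminus (BEC ε1) (BEC ε2)) = ε1 + ε2 - ε1 * ε2 := by
  obtain ⟨h1₀, h1₁⟩ := h1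
  obtain ⟨h2₀, h2₁⟩ := h2
  have hnone : ∀ y2 u, Wminus (BEC ε1) (BEC ε2) (none, y2) u = ε1 / 2 * ∑ x, BEC ε2 y2 x :=
    fun _ => Wminus_apply_of_fst_const _ _ fun _ => rfl
  have hnone_none : ∀ u, Wminus (BEC ε1) (BEC ε2) (none, none) u = ε1 * ε2 := fun u => by
    rw [hnone, sum_BEC_none]; ring
  have hnone_some : ∀ v u, Wminus (BEC ε1) (BEC ε2) (none, some v) u = ε1 / 2 * (1 - ε2) :=
    fun v u => by rw [hnone, sum_BEC_some]
  have hsome_none : ∀ v u, Wminus (BEC ε1) (BEC ε2) (some v, none) u = ε2 / 2 * (1 - ε1) :=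
    fun _ u => by rw [Wminus_apply_of_snd_const _ _ (fun _ => rfl) u, sum_BEC_some]
  simp only [bhatt, Fintype.sum_prod_type, Fintype.sum_option, hnone_none, hnone_some, hsome_none,
    Wminus_BEC_some_some_mul, Real.sqrt_zero,
    Real.sqrt_mul_self (by positivity : 0 ≤ ε1 * ε2),
    Real.sqrt_mul_self (by nlinarith : 0 ≤ ε1 / 2 * (1 - ε2)),
    Real.sqrt_mul_self (by nlinarith : 0 ≤ ε2 / 2 * (1 - ε1)), ZMod.sum_univ_two]
  ring

/-- for BECs, Z(W⁻) = ε1 + ε2 − ε1·ε2, Z(W⁺) = ε1·ε2, and the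
bound Z(W⁻) ≤ Z(W1) + Z(W2) − Z(W1)·Z(W2) holds with equality. -/
theorem bhatt_kernel_BEC (ε1 ε2 : ℝ) (h1 : ε1 ∈ Set.Icc (0:ℝ) 1)
    (h2 : ε2 ∈ Set.Icc (0:ℝ) 1) :
    bhatt (Wminus (BEC ε1) (BEC ε2)) = ε1 + ε2 - ε1 * ε2 ∧
    bhatt (Wplus (BEC ε1) (BEC ε2)) = ε1 * ε2 ∧
    bhatt (Wminus (BEC ε1) (BEC ε2)) =
      bhatt (BEC ε1) + bhatt (BEC ε2) - bhatt (BEC ε1) * bhatt (BEC ε2) := by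
  have hZ1 : bhatt (BEC ε1) = ε1 := bhatt_BEC h1.1
  have hZ2 : bhatt (BEC ε2) = ε2 := bhatt_BEC h2.1
  refine ⟨bhatt_Wminus_BEC h1 h2, ?_, ?_⟩
  · rw [bhatt_Wplus _ (BEC_nonneg h2), hZ1, hZ2]
  · rw [bhatt_Wminus_BEC h1 h2, hZ1, hZ2]
end

section
/- Let W1 and W2 be B-DMCs with finite output alphabets Y1 and Y2. Then ∑_{y1 ∈ Y1} ∑_{y2 ∈ Y2} (1/2)·(√(W1(y1|0)·W2(y2|0)) + √(W1(y1|1)·W2(y2|1)))·(√(W1(y1|0)·W2(y2|1)) + √(W1(y1|1)·W2(y2|0))) = Z(W1) + Z(W2). -/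
open Finset Real

/-- A binary-input discrete memoryless channel (B-DMC): nonnegative entries
and each row (fixed input) sums to 1. -/
def IsBDMC {Y : Type*} [Fintype Y] (W : Y → ZMod 2 → ℝ) : Prop :=
  (∀ y x, 0 ≤ W y x) ∧ (∀ x, ∑ y, W y x = 1)

/-- Expanding the product, the terms `√(a₀ b₀) √(a₀ b₁)` etc. each share a square factor,
which is what separates the two channels. -/
lemma cross_term_eq {a₀ a₁ b₀ b₁ : ℝ} (ha₀ : 0 ≤ a₀) (ha₁ : 0 ≤ a₁) (hb₀ : 0 ≤ b₀)
    (hb₁ : 0 ≤ b₁) :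
    (1 / 2) * (√(a₀ * b₀) + √(a₁ * b₁)) * (√(a₀ * b₁) + √(a₁ * b₀)) =
      (1 / 2) * ((a₀ + a₁) * √(b₀ * b₁) + (b₀ + b₁) * √(a₀ * a₁)) := by
  simp only [sqrt_mul ha₀, sqrt_mul ha₁, sqrt_mul hb₀]
  linear_combination (1 / 2) * √b₀ * √b₁ * (mul_self_sqrt ha₀ + mul_self_sqrt ha₁) +
    (1 / 2) * √a₀ * √a₁ * (mul_self_sqrt hb₀ + mul_self_sqrt hb₁)

lemma IsBDMC.sum_add_eq_two {Y : Type*} [Fintype Y] {W : Y → ZMod 2 → ℝ} (hW : IsBDMC W) :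
    ∑ y, (W y 0 + W y 1) = 2 := by
  rw [sum_add_distrib, hW.2 0, hW.2 1]
  norm_num

/-- the cross-term sum equals Z(W1) + Z(W2). -/
theorem cross_sum_eq {Y1 Y2 : Type*} [Fintype Y1] [Fintype Y2]
    (W1 : Y1 → ZMod 2 → ℝ) (W2 : Y2 → ZMod 2 → ℝ)
    (h1 : IsBDMC W1) (h2 : IsBDMC W2) :
    ∑ y1, ∑ y2,
      (1 / 2) *
        (Real.sqrt (W1 y1 0 * W2 y2 0) + Real.sqrt (W1 y1 1 * W2 y2 1)) *
        (Real.sqrt (W1 y1 0 * W2 y2 1) + Real.sqrt (W1 y1 1 * W2 y2 0)) =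
      bhatt W1 + bhatt W2 := by
  calc _ = ∑ y1, ∑ y2, (1 / 2) * ((W1 y1 0 + W1 y1 1) * √(W2 y2 0 * W2 y2 1) +
          (W2 y2 0 + W2 y2 1) * √(W1 y1 0 * W1 y1 1)) := by
        refine sum_congr rfl fun y1 _ => sum_congr rfl fun y2 _ => ?_
        exact cross_term_eq (h1.1 y1 0) (h1.1 y1 1) (h2.1 y2 0) (h2.1 y2 1)
    _ = (1 / 2) * ((∑ y1, (W1 y1 0 + W1 y1 1)) * bhatt W2 +
          (∑ y2, (W2 y2 0 + W2 y2 1)) * bhatt W1) := by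
        rw [bhatt, bhatt, sum_mul_sum, sum_mul_sum, sum_comm (s := univ (α := Y2)),
          ← sum_add_distrib, mul_sum]
        refine sum_congr rfl fun y1 _ => ?_
        rw [← sum_add_distrib, mul_sum]
    _ = bhatt W1 + bhatt W2 := by
        rw [h1.sum_add_eq_two, h2.sum_add_eq_two]
        ring
end
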